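/- arXiv:1110.1268 — 2 statements merged into one kernel-verified Lean document; each statement's English description precedes it below -/
import Mathlib

section
/- Let k ≥ 2 be an integer and let G be a non-complete connected simple graph on n vertices with minimum degree δ(G) ≥ n/2 − 1 + log_k(n). Then the rainbow connection number of G satisfies rc(G) ≤ k. -/
open SimpleGraph

/-- A graph `G` is rainbow connected under an edge-coloring `c` if every pair of
distinct vertices is joined by a path whose edges receive pairwise distinct colors. -/
def IsRainbowConnected {V α : Type*} (G : SimpleGraph V) (c : Sym2 V → α) : Prop :=
  ∀ u v : V, u ≠ v → ∃ p : G.Walk u v, p.IsPath ∧ (p.edges.map c).Nodup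

/-!
Two non-adjacent vertices `u ≠ v` have at least `2δ - (n - 2) ≥ 2 log_k n` common
neighbours `w`, and the paths `u - w - v` are edge-disjoint. Under a uniformly random
`k`-colouring, none of them is rainbow with probability `k ^ (-#common) ≤ 1 / n ^ 2`. There are
fewer than `n ^ 2` such pairs, so by the union bound some colouring gives every non-adjacent pair
a rainbow path of length two.
-/

open Finset

theorem Finset.exists_forall_notMem_of_card_mul_le {ι β : Type*} [Fintype β] [Nonempty β]
    {P : Finset ι} {B : ι → Finset β} {m : ℕ} (hP : #P < m)
    (hB : ∀ p ∈ P, #(B p) * m ≤ Fintype.card β) : ∃ b, ∀ p ∈ P, b ∉ B p := by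
  classical
  by_contra! hcover
  have hcard : Fintype.card β ≤ ∑ p ∈ P, #(B p) :=
    calc Fintype.card β ≤ #(P.biUnion B) :=
          card_le_card fun b _ ↦ mem_biUnion.mpr (hcover b)
      _ ≤ ∑ p ∈ P, #(B p) := card_biUnion_le
  have hmul : Fintype.card β * m ≤ #P * Fintype.card β :=
    calc Fintype.card β * m ≤ ∑ p ∈ P, #(B p) * m := by
          rw [← sum_mul]; exact Nat.mul_le_mul_right _ hcard
      _ ≤ ∑ _p ∈ P, Fintype.card β := sum_le_sum hB
      _ = #P * Fintype.card β := by rw [sum_const, smul_eq_mul]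
  have hpos := Fintype.card_pos (α := β)
  nlinarith

theorem card_mul_pow_le_of_forall_apply_eq {ι E α : Type*} [Fintype E] [DecidableEq E]
    [Fintype α] {S : Finset ι} {e₁ e₂ : ι → E} (he₂ : Set.InjOn e₂ S)
    (hdisj : ∀ i ∈ S, ∀ j ∈ S, e₁ i ≠ e₂ j) {C : Finset (E → α)}
    (hC : ∀ c ∈ C, ∀ i ∈ S, c (e₁ i) = c (e₂ i)) :
    #C * Fintype.card α ^ #S ≤ Fintype.card α ^ Fintype.card E := by
  set T := univ \ S.image e₂
  have hT : #T + #S = Fintype.card E := by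
    rw [card_sdiff_of_subset (subset_univ _), card_univ, card_image_of_injOn he₂,
      Nat.sub_add_cancel ((card_image_of_injOn he₂).symm.trans_le (card_le_univ _))]
  -- a colouring in `C` is determined on `T`: at `e₂ i ∉ T` it takes its value at `e₁ i ∈ T`
  have hrestrict : Set.InjOn (fun (c : E → α) (t : T) ↦ c t) C := by
    intro c hc c' hc' hcc
    funext e
    by_cases he : e ∈ T
    · exact congrFun hcc ⟨e, he⟩
    · obtain ⟨i, hi, rfl⟩ : ∃ i ∈ S, e₂ i = e := by simpa [T] using he
      have h₁ : e₁ i ∈ T := by simpa [T] using fun j hj ↦ (hdisj i hi j hj).symm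
      rw [← hC c hc i hi, ← hC c' hc' i hi]
      exact congrFun hcc ⟨_, h₁⟩
  calc _ ≤ Fintype.card (T → α) * Fintype.card α ^ #S :=
        Nat.mul_le_mul_right _ (card_le_card_of_injOn _ (fun _ _ ↦ mem_univ _) hrestrict)
    _ = _ := by rw [Fintype.card_fun, Fintype.card_coe, ← pow_add, hT]

theorem sq_le_pow_of_two_mul_logb_le {b x m : ℕ} (hb : 1 < b) (h : 2 * Real.logb b x ≤ m) :
    x ^ 2 ≤ b ^ m := by
  obtain rfl | hx := x.eq_zero_or_pos
  · simp
  have hb' : (1 : ℝ) < b := by exact_mod_cast hb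
  have : ((x ^ 2 : ℕ) : ℝ) ≤ (b : ℝ) ^ (m : ℝ) := by
    rw [← Real.logb_le_iff_le_rpow hb' (by positivity), Nat.cast_pow, Real.logb_pow]
    exact_mod_cast h
  rw [Real.rpow_natCast] at this
  exact_mod_cast this

namespace SimpleGraph

variable {V α : Type*} (G : SimpleGraph V)

def HasRainbowTwoPath (c : Sym2 V → α) (u v : V) : Prop :=
  ∃ w, G.Adj u w ∧ G.Adj w v ∧ c s(u, w) ≠ c s(w, v)

instance [Fintype V] [DecidableRel G.Adj] [DecidableEq α] (c : Sym2 V → α) (u v : V) :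
    Decidable (G.HasRainbowTwoPath c u v) := by
  unfold HasRainbowTwoPath; infer_instance

theorem isRainbowConnected_of_hasRainbowTwoPath {c : Sym2 V → α}
    (h : ∀ u v, u ≠ v → ¬G.Adj u v → G.HasRainbowTwoPath c u v) :
    IsRainbowConnected G c := by
  intro u v huv
  by_cases hadj : G.Adj u v
  · exact ⟨hadj.toWalk, by simp [huv], by simp⟩
  · obtain ⟨w, huw, hwv, hc⟩ := h u v huv hadj
    refine ⟨.cons huw (.cons hwv .nil), ?_, by simp [hc]⟩
    simp [Walk.isPath_def, huw.ne, hwv.ne, huv]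

variable [Fintype V] [DecidableRel G.Adj]

theorem two_mul_minDegree_add_two_le_of_not_adj [DecidableEq V] {u v : V} (huv : u ≠ v)
    (hadj : ¬G.Adj u v) :
    2 * G.minDegree + 2 ≤ Fintype.card V + #(G.neighborFinset u ∩ G.neighborFinset v) := by
  have hunion : G.neighborFinset u ∪ G.neighborFinset v ⊆ ({u, v} : Finset V)ᶜ := by
    intro w hw
    simp only [mem_union, mem_neighborFinset] at hw
    simp only [mem_compl, mem_insert, mem_singleton, not_or]
    rcases hw with h | h
    · exact ⟨h.ne', by rintro rfl; exact hadj h⟩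
    · exact ⟨by rintro rfl; exact hadj h.symm, h.ne'⟩
  have hpair : #({u, v} : Finset V) = 2 := card_pair huv
  have hcompl := card_le_card hunion
  rw [card_compl, hpair] at hcompl
  have htwo := hpair ▸ card_le_univ ({u, v} : Finset V)
  have hdeg := card_union_add_card_inter (G.neighborFinset u) (G.neighborFinset v)
  rw [card_neighborFinset_eq_degree, card_neighborFinset_eq_degree] at hdeg
  have hu := G.minDegree_le_degree u
  have hv := G.minDegree_le_degree v
  omega

theorem sq_card_le_pow_card_inter_neighborFinset [DecidableEq V] {k : ℕ} (hk : 1 < k)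
    (hδ : (Fintype.card V : ℝ) / 2 - 1 + Real.logb k (Fintype.card V) ≤ G.minDegree)
    {u v : V} (huv : u ≠ v) (hadj : ¬G.Adj u v) :
    Fintype.card V ^ 2 ≤ k ^ #(G.neighborFinset u ∩ G.neighborFinset v) := by
  refine sq_le_pow_of_two_mul_logb_le hk ?_
  have hcommon : ((2 * G.minDegree + 2 : ℕ) : ℝ) ≤
      (Fintype.card V + #(G.neighborFinset u ∩ G.neighborFinset v) : ℕ) := by
    exact_mod_cast G.two_mul_minDegree_add_two_le_of_not_adj huv hadj
  push_cast at hcommon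
  linarith

theorem card_not_hasRainbowTwoPath_mul_pow_le [DecidableEq V] [Fintype α] [DecidableEq α]
    {u v : V} (huv : u ≠ v) :
    #{c : Sym2 V → α | ¬G.HasRainbowTwoPath c u v} *
        Fintype.card α ^ #(G.neighborFinset u ∩ G.neighborFinset v) ≤
      Fintype.card α ^ Fintype.card (Sym2 V) := by
  refine card_mul_pow_le_of_forall_apply_eq (e₁ := fun w ↦ s(u, w)) (e₂ := fun w ↦ s(w, v))
    ?_ ?_ fun c hc w hw ↦ ?_
  · intro w hw w' hw' h
    exact Sym2.congr_left.mp h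
  · intro w hw w' hw' h
    rcases Sym2.eq_iff.mp h with ⟨-, rfl⟩ | ⟨rfl, -⟩
    · simp at hw
    · exact huv rfl
  · simp only [mem_filter, mem_univ, true_and, HasRainbowTwoPath, not_exists, not_and,
      not_not] at hc
    rw [mem_inter, mem_neighborFinset, mem_neighborFinset] at hw
    exact hc w hw.1 hw.2.symm

end SimpleGraph

theorem rc_le_of_minDegree_general (k n : ℕ) (hk : 2 ≤ k) (G : SimpleGraph (Fin n))
    [DecidableRel G.Adj]
    (hδ : (n : ℝ) / 2 - 1 + Real.logb k n ≤ (G.minDegree : ℝ)) :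
    ∃ c : Sym2 (Fin n) → Fin k, IsRainbowConnected G c := by
  have : NeZero k := ⟨by omega⟩
  obtain rfl | hn := n.eq_zero_or_pos
  · exact ⟨0, fun u ↦ u.elim0⟩
  let P := (univ : Finset (Fin n)).offDiag.filter fun p ↦ ¬G.Adj p.1 p.2
  have hP : #P < n ^ 2 :=
    calc #P ≤ #(univ : Finset (Fin n)).offDiag := card_filter_le _ _
      _ < n ^ 2 := by
        rw [offDiag_card, card_univ, Fintype.card_fin, sq]
        exact Nat.sub_lt (by positivity) hn
  have hbad : ∀ p ∈ P,
      #{c : Sym2 (Fin n) → Fin k | ¬G.HasRainbowTwoPath c p.1 p.2} * n ^ 2 ≤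
        Fintype.card (Sym2 (Fin n) → Fin k) := by
    rintro ⟨u, v⟩ hp
    obtain ⟨huv, hadj⟩ : u ≠ v ∧ ¬G.Adj u v := by simpa [P] using hp
    have hsq := G.sq_card_le_pow_card_inter_neighborFinset hk (by simpa using hδ) huv hadj
    rw [Fintype.card_fin] at hsq
    calc _ ≤ #{c | ¬G.HasRainbowTwoPath c u v} *
            k ^ #(G.neighborFinset u ∩ G.neighborFinset v) := Nat.mul_le_mul_left _ hsq
      _ ≤ _ := by simpa using G.card_not_hasRainbowTwoPath_mul_pow_le (α := Fin k) huv
  obtain ⟨c, hc⟩ := exists_forall_notMem_of_card_mul_le hP hbad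
  refine ⟨c, G.isRainbowConnected_of_hasRainbowTwoPath fun u v huv hadj ↦ ?_⟩
  simpa [P, huv, hadj] using hc (u, v)

/-- If `k ≥ 2` and `G` is a non-complete connected graph on `n` vertices with
minimum degree at least `n/2 - 1 + log_k n`, then `rc(G) ≤ k`, i.e. there is a
`k`-edge-coloring making `G` rainbow connected. -/
theorem rc_le_of_minDegree (k n : ℕ) (hk : 2 ≤ k) (G : SimpleGraph (Fin n))
    [DecidableRel G.Adj] (hnc : G ≠ ⊤) (hconn : G.Connected)
    (hδ : (n : ℝ) / 2 - 1 + Real.logb k n ≤ (G.minDegree : ℝ)) :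
    ∃ c : Sym2 (Fin n) → Fin k, IsRainbowConnected G c :=
  rc_le_of_minDegree_general k n hk G hδ
end

section
/- Let k ≥ 3 be an integer and let G be a non-complete connected bipartite simple graph on n vertices, with bipartition classes X and Y, such that any two distinct vertices lying in the same class have at least 2·log_{k²/(3k−2)}(k)·log_k(n) common neighbors in the other class. Then rc(G) ≤ k. -/
/-!
Colour the edges uniformly at random with `k` colours. Two non-adjacent vertices `u`, `v` of the
same class are joined through their `m` common neighbours by `m` edge-disjoint paths of length
two; if they lie in different classes, pick a neighbour `w` of `v`: the common neighbours of `u`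
and `w` give `m` paths of length three sharing only the edge `wv`. Once the colour of that edge
is fixed, the paths fail to be rainbow independently, each with probability at most
`(3k - 2) / k²`, so `u` and `v` have no rainbow path with probability at most
`((3k - 2) / k²) ^ m`, which the hypothesis on `m` makes at most `n⁻²`. A union bound over the
fewer than `n²` ordered pairs of distinct vertices leaves a colouring that rainbow connects `G`.
-/

open SimpleGraph

open Finset Function

theorem exists_forall_of_card_filter_not_mul_le {κ β : Type*} [Fintype β] [Nonempty β]
    (s : Finset κ) (P : κ → β → Prop) [∀ i, DecidablePred (P i)] {N : ℕ} (hs : #s < N)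
    (h : ∀ i ∈ s, #{b | ¬P i b} * N ≤ Fintype.card β) : ∃ b, ∀ i ∈ s, P i b := by
  classical
  by_contra! hbad
  have hcover : (univ : Finset β) ⊆ s.biUnion fun i => {b | ¬P i b} := fun b _ => by
    obtain ⟨i, hi, hb⟩ := hbad b
    exact mem_biUnion.2 ⟨i, hi, by simpa using hb⟩
  have hβ := Fintype.card_pos (α := β)
  have : Fintype.card β * N ≤ #s * Fintype.card β := calc
    Fintype.card β * N ≤ (∑ i ∈ s, #{b | ¬P i b}) * N := by
      gcongr; exact (card_le_card hcover).trans card_biUnion_le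
    _ ≤ ∑ _i ∈ s, Fintype.card β := by rw [sum_mul]; exact sum_le_sum h
    _ = #s * Fintype.card β := by rw [sum_const, smul_eq_mul]
  nlinarith

section Counting

variable {ι E α : Type*} [Fintype ι] [DecidableEq ι] [Fintype E] [DecidableEq E] [Fintype α]

theorem card_filter_comp_embedding (j : ι ↪ E) (P : (ι → α) → Prop) [DecidablePred P] :
    #{c : E → α | P (c ∘ j)} =
      #{x : ι → α | P x} * Fintype.card α ^ (Fintype.card E - Fintype.card ι) := by
  let split : (E → α) ≃ (ι → α) × ({y // y ∉ Set.range j} → α) :=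
    (Equiv.piEquivPiSubtypeProd (· ∈ Set.range j) fun _ => α).trans
      (((Equiv.ofInjective j j.injective).arrowCongr (Equiv.refl α)).symm.prodCongr (.refl _))
  have hsplit (c : E → α) : (split c).1 = c ∘ j := by
    ext i
    simp [split, Equiv.arrowCongr]
  have hcard := Fintype.card_congr <| (split.subtypeEquiv (p := fun c => P (c ∘ j))
    (q := fun x => P x.1) fun c => by rw [hsplit]).trans Equiv.prodSubtypeFstEquivSubtypeProd
  rw [Fintype.card_prod, Fintype.card_fun, Fintype.card_subtype_compl,
    Set.card_range_of_injective j.injective] at hcard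
  simpa only [Fintype.card_subtype] using hcard

variable [DecidableEq α]

theorem card_not_nodup_triple_le (a : α) :
    #{p : α × α | ¬[p.1, p.2, a].Nodup} ≤ 3 * Fintype.card α - 2 := by
  have hpair (x : α) (hx : x ≠ a) : #{y | ¬[x, y, a].Nodup} ≤ 2 := by
    refine (card_le_card fun y hy => ?_).trans (card_insert_le x {a})
    simp only [mem_filter, mem_univ, true_and, List.nodup_cons, List.mem_cons] at hy
    grind
  have hrest : ∑ x ∈ univ.erase a, #{y | ¬[x, y, a].Nodup} ≤ (Fintype.card α - 1) * 2 := by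
    have := sum_le_card_nsmul (univ.erase a) _ 2 fun x hx => hpair x (ne_of_mem_erase hx)
    rwa [card_erase_of_mem (mem_univ a), card_univ, smul_eq_mul] at this
  have hfirst : #{y | ¬[a, y, a].Nodup} ≤ Fintype.card α := card_le_univ _
  have hk : 1 ≤ Fintype.card α := Fintype.card_pos_iff.mpr ⟨a⟩
  rw [card_filter, Fintype.sum_prod_type]
  simp only [← card_filter]
  rw [← add_sum_erase _ _ (mem_univ a)]
  omega

theorem card_forall_not_nodup_le :
    #{x : Option (ι ⊕ ι) → α | ∀ i, ¬[x (some (.inl i)), x (some (.inr i)), x none].Nodup} ≤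
      Fintype.card α * (3 * Fintype.card α - 2) ^ Fintype.card ι := by
  let split : (Option (ι ⊕ ι) → α) ≃ α × (ι → α × α) :=
    Equiv.piOptionEquivProd.trans ((Equiv.refl α).prodCongr
      ((Equiv.sumArrowEquivProdArrow ι ι α).trans (Equiv.arrowProdEquivProdArrow ι _ _).symm))
  have hcard := Fintype.card_congr <| (split.subtypeEquiv
    (p := fun x => ∀ i, ¬[x (some (.inl i)), x (some (.inr i)), x none].Nodup)
    (q := fun p => ∀ i, ¬[(p.2 i).1, (p.2 i).2, p.1].Nodup) fun x => Iff.rfl).trans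
    (Equiv.subtypeProdEquivSigmaSubtype fun (a : α) (y : ι → α × α) =>
      ∀ i, ¬[(y i).1, (y i).2, a].Nodup)
  have hfiber (a : α) : Fintype.card {y : ι → α × α // ∀ i, ¬[(y i).1, (y i).2, a].Nodup} ≤
      (3 * Fintype.card α - 2) ^ Fintype.card ι := by
    rw [Fintype.card_congr
        (Equiv.subtypePiEquivPi (p := fun _ (p : α × α) => ¬[p.1, p.2, a].Nodup)),
      Fintype.card_pi, prod_const, card_univ, Fintype.card_subtype]
    exact Nat.pow_le_pow_left (card_not_nodup_triple_le a) _
  rw [← Fintype.card_subtype, hcard, Fintype.card_sigma]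
  exact (sum_le_sum fun a _ => hfiber a).trans_eq (by simp)

theorem card_colorings_forall_not_nodup_mul_le (e f : ι → E) (g : E)
    (hinj : Injective fun o : Option (ι ⊕ ι) => o.elim g (Sum.elim e f)) :
    #{c : E → α | ∀ i, ¬[c (e i), c (f i), c g].Nodup} * (Fintype.card α ^ 2) ^ Fintype.card ι ≤
      Fintype.card α ^ Fintype.card E * (3 * Fintype.card α - 2) ^ Fintype.card ι := by
  set k := Fintype.card α
  set m := Fintype.card ι
  have hcard := card_filter_comp_embedding (α := α) ⟨_, hinj⟩
    fun x => ∀ i, ¬[x (some (.inl i)), x (some (.inr i)), x none].Nodup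
  have hM : 2 * m + 1 ≤ Fintype.card E := by
    simpa [two_mul] using Fintype.card_le_of_injective _ hinj
  simp only [Fintype.card_option, Fintype.card_sum] at hcard
  obtain ⟨d, hd⟩ := Nat.exists_eq_add_of_le hM
  change #{c : E → α | ∀ i, ¬[c (e i), c (f i), c g].Nodup} = _ at hcard
  rw [hcard, hd, show m + m + 1 = 2 * m + 1 by ring, Nat.add_sub_cancel_left]
  calc _ ≤ k * (3 * k - 2) ^ m * k ^ d * (k ^ 2) ^ m := by
        gcongr; exact card_forall_not_nodup_le
    _ = k ^ (2 * m + 1 + d) * (3 * k - 2) ^ m := by ring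

end Counting

theorem sq_mul_pow_le_pow {k n m : ℕ} (hk : 3 ≤ k) (hn : 0 < n)
    (hm : 2 * Real.logb ((k : ℝ) ^ 2 / (3 * (k : ℝ) - 2)) k * Real.logb k n ≤ m) :
    n ^ 2 * (3 * k - 2) ^ m ≤ (k ^ 2) ^ m := by
  have hk' : (3 : ℝ) ≤ k := by exact_mod_cast hk
  have hden : (0 : ℝ) < 3 * k - 2 := by linarith
  set b : ℝ := (k : ℝ) ^ 2 / (3 * k - 2)
  have hb : 1 < b := by rw [lt_div_iff₀ hden]; nlinarith
  have hlog : 2 * Real.logb b k * Real.logb k n = Real.logb b ((n : ℝ) ^ 2) := by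
    rw [mul_assoc, Real.mul_logb (by positivity) (by linarith) (by linarith), Real.logb_pow]
    ring
  have hsq : (n : ℝ) ^ 2 ≤ b ^ m := calc
    (n : ℝ) ^ 2 = b ^ Real.logb b ((n : ℝ) ^ 2) :=
      (Real.rpow_logb (by linarith) hb.ne' (by positivity)).symm
    _ ≤ b ^ (m : ℝ) := Real.rpow_le_rpow_of_exponent_le hb.le (hlog ▸ hm)
    _ = b ^ m := Real.rpow_natCast b m
  have hcast : ((3 * k - 2 : ℕ) : ℝ) = 3 * k - 2 := by
    rw [Nat.cast_sub (by omega)]; push_cast; ring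
  have : (n : ℝ) ^ 2 * (3 * k - 2) ^ m ≤ ((k : ℝ) ^ 2) ^ m := calc
    (n : ℝ) ^ 2 * (3 * k - 2) ^ m ≤ b ^ m * (3 * k - 2) ^ m := by gcongr
    _ = ((k : ℝ) ^ 2) ^ m := by rw [← mul_pow, div_mul_cancel₀ _ hden.ne']
  exact_mod_cast hcast ▸ this

namespace SimpleGraph

variable {V α : Type*} {G : SimpleGraph V} {c : Sym2 V → α} {u v w z : V}

def HasRainbowPath (G : SimpleGraph V) (c : Sym2 V → α) (u v : V) : Prop :=
  ∃ p : G.Walk u v, p.IsPath ∧ (p.edges.map c).Nodup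

theorem hasRainbowPath_of_adj (h : G.Adj u v) : G.HasRainbowPath c u v :=
  ⟨h.toWalk, by simp [h.ne], by simp⟩

theorem hasRainbowPath_of_adj_of_adj (huz : G.Adj u z) (hzv : G.Adj z v) (huv : u ≠ v)
    (hc : c s(u, z) ≠ c s(z, v)) : G.HasRainbowPath c u v :=
  ⟨.cons huz (.cons hzv .nil), by simp [huz.ne, hzv.ne, huv], by simp [hc]⟩

theorem hasRainbowPath_of_adj_of_adj_of_adj (huz : G.Adj u z) (hzw : G.Adj z w)
    (hwv : G.Adj w v) (huw : u ≠ w) (huv : u ≠ v) (hzv : z ≠ v)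
    (hc : [c s(u, z), c s(z, w), c s(w, v)].Nodup) : G.HasRainbowPath c u v :=
  ⟨.cons huz (.cons hzw (.cons hwv .nil)), by simp [huz.ne, hzw.ne, hwv.ne, huw, huv, hzv],
    by simpa using hc⟩

variable [Fintype V] [DecidableEq V] [DecidableRel G.Adj] [Fintype α] [DecidableEq α]

theorem adj_and_adj_of_mem_neighborFinset_inter
    (hz : z ∈ G.neighborFinset u ∩ G.neighborFinset v) : G.Adj u z ∧ G.Adj z v := by
  simpa [adj_comm] using hz

open Classical in
theorem card_not_hasRainbowPath_mul_le_of_commonNeighbors (huv : u ≠ v) :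
    #{c : Sym2 V → α | ¬G.HasRainbowPath c u v} *
        (Fintype.card α ^ 2) ^ #(G.neighborFinset u ∩ G.neighborFinset v) ≤
      Fintype.card α ^ Fintype.card (Sym2 V) *
        (3 * Fintype.card α - 2) ^ #(G.neighborFinset u ∩ G.neighborFinset v) := by
  set Z := G.neighborFinset u ∩ G.neighborFinset v
  have hZ (z : Z) := adj_and_adj_of_mem_neighborFinset_inter z.2
  -- `s(u, v)` need not be an edge: it only fills the shared slot of the counting lemma.
  have hinj : Injective fun o : Option (Z ⊕ Z) =>
      o.elim s(u, v) (Sum.elim (fun z => s(u, z)) fun z => s(z, v)) := by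
    have hzu (z : Z) : (z : V) ≠ u := (hZ z).1.ne'
    have hzv (z : Z) : (z : V) ≠ v := (hZ z).2.ne
    rintro (_ | z | z) (_ | z' | z') <;> simp <;> grind
  rw [← Fintype.card_coe Z]
  refine le_trans (Nat.mul_le_mul_right _ (card_le_card fun c hc => ?_))
    (card_colorings_forall_not_nodup_mul_le _ _ _ hinj)
  simp only [mem_filter, mem_univ, true_and] at hc ⊢
  exact fun z hz => hc <|
    hasRainbowPath_of_adj_of_adj (hZ z).1 (hZ z).2 huv fun h => by simp [h] at hz

open Classical in
theorem card_not_hasRainbowPath_mul_le_of_commonNeighbors_of_adj (huv : u ≠ v)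
    (hnadj : ¬G.Adj u v) (hwv : G.Adj w v) (hwu : w ≠ u) :
    #{c : Sym2 V → α | ¬G.HasRainbowPath c u v} *
        (Fintype.card α ^ 2) ^ #(G.neighborFinset u ∩ G.neighborFinset w) ≤
      Fintype.card α ^ Fintype.card (Sym2 V) *
        (3 * Fintype.card α - 2) ^ #(G.neighborFinset u ∩ G.neighborFinset w) := by
  set Z := G.neighborFinset u ∩ G.neighborFinset w
  have hZ (z : Z) := adj_and_adj_of_mem_neighborFinset_inter z.2
  have hzv (z : Z) : (z : V) ≠ v := fun h => hnadj (h ▸ (hZ z).1)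
  have hinj : Injective fun o : Option (Z ⊕ Z) =>
      o.elim s(w, v) (Sum.elim (fun z => s(u, z)) fun z => s(z, w)) := by
    have hzu (z : Z) : (z : V) ≠ u := (hZ z).1.ne'
    have hzw (z : Z) : (z : V) ≠ w := (hZ z).2.ne
    rintro (_ | z | z) (_ | z' | z') <;> simp <;> grind
  rw [← Fintype.card_coe Z]
  refine le_trans (Nat.mul_le_mul_right _ (card_le_card fun c hc => ?_))
    (card_colorings_forall_not_nodup_mul_le _ _ _ hinj)
  simp only [mem_filter, mem_univ, true_and] at hc ⊢
  exact fun z hz => hc <|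
    hasRainbowPath_of_adj_of_adj_of_adj (hZ z).1 (hZ z).2 hwv hwu.symm huv (hzv z) hz

open Classical in
theorem exists_card_not_hasRainbowPath_mul_le {A : Finset V} {t : ℝ}
    (hA : G.IsIndepSet (↑A)ᶜ)
    (ht : ∀ x ∈ A, ∀ y ∈ A, x ≠ y → t ≤ #(G.neighborFinset x ∩ G.neighborFinset y))
    (hu : u ∈ A) (huv : u ≠ v) (hnadj : ¬G.Adj u v) (hwv : G.Adj w v) :
    ∃ m : ℕ, t ≤ m ∧ #{c : Sym2 V → α | ¬G.HasRainbowPath c u v} * (Fintype.card α ^ 2) ^ m ≤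
      Fintype.card α ^ Fintype.card (Sym2 V) * (3 * Fintype.card α - 2) ^ m := by
  by_cases hv : v ∈ A
  · exact ⟨_, ht u hu v hv huv, card_not_hasRainbowPath_mul_le_of_commonNeighbors huv⟩
  have hw : w ∈ A := by
    by_contra hw
    exact hA hw hv hwv.ne hwv
  have hwu : w ≠ u := by rintro rfl; exact hnadj hwv
  exact ⟨_, ht u hu w hw hwu.symm,
    card_not_hasRainbowPath_mul_le_of_commonNeighbors_of_adj huv hnadj hwv hwu⟩

open Classical in
theorem card_not_hasRainbowPath_mul_sq_le {A : Finset V} {k n : ℕ} (hα : Fintype.card α = k)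
    (hV : Fintype.card V = n) (hk : 3 ≤ k) (hA : G.IsIndepSet (↑A)ᶜ)
    (ht : ∀ x ∈ A, ∀ y ∈ A, x ≠ y →
      2 * Real.logb ((k : ℝ) ^ 2 / (3 * (k : ℝ) - 2)) k * Real.logb k n ≤
        #(G.neighborFinset x ∩ G.neighborFinset y))
    (hu : u ∈ A) (huv : u ≠ v) (hwv : G.Adj w v) :
    #{c : Sym2 V → α | ¬G.HasRainbowPath c u v} * n ^ 2 ≤ k ^ Fintype.card (Sym2 V) := by
  by_cases hadj : G.Adj u v
  · simp [hasRainbowPath_of_adj hadj]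
  obtain ⟨m, htm, hm⟩ := exists_card_not_hasRainbowPath_mul_le (α := α) hA ht hu huv hadj hwv
  rw [hα] at hm
  refine Nat.le_of_mul_le_mul_right ?_ (pow_pos (by omega : 0 < 3 * k - 2) m)
  calc _ = _ * (n ^ 2 * (3 * k - 2) ^ m) := by ring
    _ ≤ _ * (k ^ 2) ^ m := by
      gcongr; exact sq_mul_pow_le_pow hk (hV ▸ Fintype.card_pos_iff.2 ⟨u⟩) htm
    _ ≤ _ := hm

end SimpleGraph

theorem rc_le_of_bipartite_general (k n : ℕ) (hk : 3 ≤ k) (G : SimpleGraph (Fin n))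
    [DecidableRel G.Adj] (hconn : G.Connected)
    (X Y : Finset (Fin n))
    (hpart : ∀ w : Fin n, w ∈ X ↔ w ∉ Y)
    (hbip : ∀ a b : Fin n, G.Adj a b → (a ∈ X ∧ b ∈ Y) ∨ (a ∈ Y ∧ b ∈ X))
    (hX : ∀ u ∈ X, ∀ v ∈ X, u ≠ v →
      2 * Real.logb ((k : ℝ) ^ 2 / (3 * (k : ℝ) - 2)) k * Real.logb k n ≤
        (((G.neighborFinset u ∩ G.neighborFinset v).filter (· ∈ Y)).card : ℝ))
    (hY : ∀ u ∈ Y, ∀ v ∈ Y, u ≠ v →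
      2 * Real.logb ((k : ℝ) ^ 2 / (3 * (k : ℝ) - 2)) k * Real.logb k n ≤
        (((G.neighborFinset u ∩ G.neighborFinset v).filter (· ∈ X)).card : ℝ)) :
    ∃ c : Sym2 (Fin n) → Fin k, IsRainbowConnected G c := by
  classical
  have hn : 0 < n := Fin.pos_iff_nonempty.2 hconn.nonempty
  have : Nonempty (Fin k) := ⟨⟨0, by omega⟩⟩
  have hXc : G.IsIndepSet (↑X)ᶜ := fun a ha b hb _ hab => by
    rcases hbip a b hab with h | h <;> simp_all
  have hYc : G.IsIndepSet (↑Y)ᶜ := fun a ha b hb _ hab => by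
    rcases hbip a b hab with h | h <;> simp_all
  have key (u v : Fin n) (huv : u ≠ v) :
      #{c : Sym2 (Fin n) → Fin k | ¬G.HasRainbowPath c u v} * n ^ 2 ≤
        k ^ Fintype.card (Sym2 (Fin n)) := by
    have : Nontrivial (Fin n) := ⟨⟨u, v, huv⟩⟩
    obtain ⟨w, hvw⟩ := hconn.preconnected.exists_adj_of_nontrivial v
    by_cases hu : u ∈ X
    · exact card_not_hasRainbowPath_mul_sq_le (Fintype.card_fin k) (Fintype.card_fin n) hk hXc
        (fun x hx y hy hxy => (hX x hx y hy hxy).trans (by exact_mod_cast card_filter_le _ _))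
        hu huv hvw.symm
    · exact card_not_hasRainbowPath_mul_sq_le (Fintype.card_fin k) (Fintype.card_fin n) hk hYc
        (fun x hx y hy hxy => (hY x hx y hy hxy).trans (by exact_mod_cast card_filter_le _ _))
        (by simpa [hpart] using hu) huv hvw.symm
  obtain ⟨c, hc⟩ := exists_forall_of_card_filter_not_mul_le (univ : Finset (Fin n)).offDiag
    (fun p (c : Sym2 (Fin n) → Fin k) => G.HasRainbowPath c p.1 p.2) (N := n ^ 2)
    (by rw [offDiag_card, card_univ, Fintype.card_fin, sq]; exact Nat.sub_lt (by positivity) hn)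
    (fun p hp => by simpa using key p.1 p.2 (by simpa using hp))
  exact ⟨c, fun u v huv => hc (u, v) (by simpa using huv)⟩

/-- If `k ≥ 3` and `G` is a non-complete connected bipartite graph on `n` vertices
with bipartition classes `X`, `Y` such that any two distinct vertices in the same
class have at least `2 · log_{k²/(3k-2)}(k) · log_k(n)` common neighbors in the
other class, then `rc(G) ≤ k`. -/
theorem rc_le_of_bipartite (k n : ℕ) (hk : 3 ≤ k) (G : SimpleGraph (Fin n))
    [DecidableRel G.Adj] (hnc : G ≠ ⊤) (hconn : G.Connected)
    (X Y : Finset (Fin n))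
    (hpart : ∀ w : Fin n, w ∈ X ↔ w ∉ Y)
    (hbip : ∀ a b : Fin n, G.Adj a b → (a ∈ X ∧ b ∈ Y) ∨ (a ∈ Y ∧ b ∈ X))
    (hX : ∀ u ∈ X, ∀ v ∈ X, u ≠ v →
      2 * Real.logb ((k : ℝ) ^ 2 / (3 * (k : ℝ) - 2)) k * Real.logb k n ≤
        (((G.neighborFinset u ∩ G.neighborFinset v).filter (· ∈ Y)).card : ℝ))
    (hY : ∀ u ∈ Y, ∀ v ∈ Y, u ≠ v →
      2 * Real.logb ((k : ℝ) ^ 2 / (3 * (k : ℝ) - 2)) k * Real.logb k n ≤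
        (((G.neighborFinset u ∩ G.neighborFinset v).filter (· ∈ X)).card : ℝ)) :
    ∃ c : Sym2 (Fin n) → Fin k, IsRainbowConnected G c :=
  rc_le_of_bipartite_general k n hk G hconn X Y hpart hbip hX hY
end
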